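/- The canonical model of DSL satisfies reachability condition (3): for any maximal consistent sets u, v of DSL formulae and any index i, if (u,v) ∈ Rᵢ^DSL then for every j ≠ i there is no maximal consistent set w with (v,w) ∈ Rⱼ^DSL. -/
import Mathlib


namespace DSLPaper

/-- DSL formulae over a set `P` of propositional letters and `k` components. -/
inductive Formula (P : Type) (k : ℕ) : Type
  | atom : P → Formula P k
  | falsum : Formula P k
  | neg : Formula P k → Formula P k
  | conj : Formula P k → Formula P k → Formula P k
  | loc : Fin k → Formula P k → Formula P k

variable {P : Type} {k : ℕ}

/-- Material implication `F → G`, defined from `neg` and `conj`. -/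
def Formula.impl (F G : Formula P k) : Formula P k := .neg (.conj F (.neg G))

/-- Bi-implication `F ↔ G`. -/
def Formula.biimpl (F G : Formula P k) : Formula P k := .conj (F.impl G) (G.impl F)

/-- Disjunction `F ∨ F'`, abbreviating `∼(∼F ∧ ∼F')`. -/
def Formula.disj (F G : Formula P k) : Formula P k := .neg (.conj (.neg F) (.neg G))

/-- `⊤ = ∼⊥`. -/
def Formula.top : Formula P k := .neg .falsum

/-- The dual modality `m̄ᵢ F = ∼ mᵢ ∼F`. -/
def Formula.bar (i : Fin k) (F : Formula P k) : Formula P k := .neg (.loc i (.neg F))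

/-- A Boolean valuation on formulae respecting the propositional connectives
(atoms and located formulae are treated as opaque atoms). -/
def RespectsProp (v : Formula P k → Bool) : Prop :=
  v .falsum = false ∧ (∀ F : Formula P k, v (.neg F) = !v F) ∧
    (∀ F G : Formula P k, v (.conj F G) = (v F && v G))

/-- Propositional tautologies: true under every valuation respecting the connectives. -/
def Tautology (F : Formula P k) : Prop :=
  ∀ v : Formula P k → Bool, RespectsProp v → v F = true

/-- Derivability in the DSL axiom system: propositional tautologies (PC), axiom K,
axiom DSL1, axiom DSL2 (for distinct location operators), modus ponens, necessitation. -/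
inductive Derivable : Formula P k → Prop
  | taut {F : Formula P k} : Tautology F → Derivable F
  | axK (i : Fin k) (F G : Formula P k) :
      Derivable (((F.impl G).bar i).impl ((F.bar i).impl (G.bar i)))
  | dsl1 (i : Fin k) (F : Formula P k) :
      Derivable (((F.bar i).biimpl F).bar i)
  | dsl2 (i j : Fin k) : i ≠ j → Derivable (((Formula.falsum : Formula P k).bar j).bar i)
  | mp {F G : Formula P k} : Derivable F → Derivable (F.impl G) → Derivable G
  | nec (i : Fin k) {F : Formula P k} : Derivable F → Derivable (F.bar i)

/-- Conjunction of a finite list of formulae. -/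
def listConj (l : List (Formula P k)) : Formula P k := l.foldr .conj .top

/-- A set of formulae is consistent if no finite conjunction of its members has a
derivable negation. -/
def Consistent (Γ : Set (Formula P k)) : Prop :=
  ∀ l : List (Formula P k), (∀ F ∈ l, F ∈ Γ) → ¬ Derivable (Formula.neg (listConj l))

/-- Maximal consistent set: consistent, and contains `F` or `∼F` for every formula `F`. -/
def MaxConsistent (Γ : Set (Formula P k)) : Prop :=
  Consistent Γ ∧ ∀ F : Formula P k, F ∈ Γ ∨ Formula.neg F ∈ Γ

/-- The canonical reachability relation: `(u,v) ∈ Rᵢ^DSL` iff `m̄ᵢ F ∈ u` implies `F ∈ v`. -/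
def canonR (i : Fin k) (u v : Set (Formula P k)) : Prop :=
  ∀ F : Formula P k, F.bar i ∈ u → F ∈ v

lemma mem_of_derivable {Γ : Set (Formula P k)} (hΓ : MaxConsistent Γ)
    {F : Formula P k} (hF : Derivable F) : F ∈ Γ := by
  rcases hΓ.2 F with hmem | hneg
  · exact hmem
  · exfalso
    apply hΓ.1 [F.neg] (by simpa using hneg)
    have htaut : Tautology (F.impl (Formula.neg (listConj [F.neg]))) := by
      intro v hv
      obtain ⟨h0, h1, h2⟩ := hv
      simp [Formula.impl, listConj, Formula.top, h0, h1, h2]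
    exact Derivable.mp hF (Derivable.taut htaut)

/-- The canonical model of DSL satisfies reachability condition (3):
if `(u,v) ∈ Rᵢ^DSL` then for every `j ≠ i` there is no maximal consistent set `w`
with `(v,w) ∈ Rⱼ^DSL`. -/
theorem canonical_cond3 {P : Type} [Countable P] {k : ℕ}
    (u v : Set (Formula P k)) (hu : MaxConsistent u) (hv : MaxConsistent v)
    (i : Fin k) (h : canonR i u v) :
    ∀ j : Fin k, j ≠ i → ∀ w : Set (Formula P k), MaxConsistent w → ¬ canonR j v w := by
  intro j hji w hw hvw
  have hd : Derivable (((Formula.falsum : Formula P k).bar j).bar i) :=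
    Derivable.dsl2 i j (Ne.symm hji)
  have h1 : (Formula.falsum.bar j : Formula P k) ∈ v :=
    h _ (mem_of_derivable hu hd)
  have h2 : (Formula.falsum : Formula P k) ∈ w := hvw _ h1
  apply hw.1 [Formula.falsum] (by simpa using h2)
  apply Derivable.taut
  intro val hval
  obtain ⟨h0, hn, hc⟩ := hval
  simp [listConj, Formula.top, h0, hn, hc]

end DSLPaper
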